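/- Let A_p ∈ ℝ^{m×n} have rank n, b ∈ ℝ^m, and y* := A_p⁺ b the least squares solution. Let E_s ∈ ℝ^{n×n} with F := E_s R⁻¹ (R invertible), E_p ∈ ℝ^{m×n}, ε := max{‖E_s‖/‖R‖, ‖E_p‖/‖A_p‖}, κ(R)ε < 1, A₁ := A_p(I - (I+F)⁻¹F), A₂ := A_p + E_p, and suppose ŷ ≠ 0 satisfies A₁ᵀ A₂ ŷ = A₁ᵀ b. Then ‖y* - ŷ‖/‖ŷ‖ ≤ κ(A_p) ε + κ(A_p)² η ( ‖b - A_p ŷ‖/(‖A_p‖‖ŷ‖) + ε ), where η := κ(R)ε/(1-κ(R)ε). -/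

import Mathlib

open Matrix
open scoped Matrix.Norms.L2Operator

/-- The `j`-th largest singular value of a real matrix. -/
noncomputable def sval {m n : ℕ} (M : Matrix (Fin m) (Fin n) ℝ) (j : Fin n) : ℝ :=
  Real.sqrt ((((Finset.univ.val.map
    (show (Mᵀ * M).IsHermitian by
      simpa using Matrix.isHermitian_conjTranspose_mul_self M).eigenvalues).sort (· ≥ ·)).getD j 0))

/-- Two-norm condition number `σ₁ / σₙ`. -/
noncomputable def condNum {m n : ℕ} (M : Matrix (Fin m) (Fin (n+1)) ℝ) : ℝ :=
  sval M 0 / sval M (Fin.last n)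

/-- Euclidean norm of a vector. -/
noncomputable def e2norm {k : ℕ} (x : Fin k → ℝ) : ℝ := Real.sqrt (∑ i, (x i)^2)

lemma e2norm_eq_norm {k : ℕ} (x : Fin k → ℝ) :
    e2norm x = ‖(EuclideanSpace.equiv (Fin k) ℝ).symm x‖ := by
  simp [e2norm, EuclideanSpace.norm_eq, Real.norm_eq_abs, sq_abs]

lemma e2norm_nonneg {k : ℕ} (x : Fin k → ℝ) : 0 ≤ e2norm x := Real.sqrt_nonneg _

lemma e2norm_mulVec_le {k l : ℕ} (M : Matrix (Fin k) (Fin l) ℝ) (x : Fin l → ℝ) :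
    e2norm (M *ᵥ x) ≤ ‖M‖ * e2norm x := by
  rw [e2norm_eq_norm, e2norm_eq_norm]
  exact M.l2_opNorm_mulVec ((EuclideanSpace.equiv (Fin l) ℝ).symm x)

lemma e2norm_pos {k : ℕ} {x : Fin k → ℝ} (hx : x ≠ 0) : 0 < e2norm x := by
  rw [e2norm_eq_norm]
  simpa [norm_pos_iff] using hx

theorem stmt8 {m n : ℕ} (Ap : Matrix (Fin m) (Fin n) ℝ)
    (R Es : Matrix (Fin n) (Fin n) ℝ) (Ep : Matrix (Fin m) (Fin n) ℝ)
    (b : Fin m → ℝ) (hrank : Ap.rank = n) (hR : IsUnit R.det)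
    (F : Matrix (Fin n) (Fin n) ℝ) (hF : F = Es * R⁻¹)
    (ε κR : ℝ) (hε : ε = max (‖Es‖ / ‖R‖) (‖Ep‖ / ‖Ap‖))
    (hκR : κR = ‖R‖ * ‖R⁻¹‖) (hsmall : κR * ε < 1)
    (A1 A2 : Matrix (Fin m) (Fin n) ℝ)
    (hA1 : A1 = Ap * (1 - (1 + F)⁻¹ * F)) (hA2 : A2 = Ap + Ep)
    (ys yh : Fin n → ℝ) (hys : ys = ((Apᵀ * Ap)⁻¹ * Apᵀ) *ᵥ b)
    (hyh : (A1ᵀ * A2) *ᵥ yh = A1ᵀ *ᵥ b) (hne : yh ≠ 0)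
    (κAp η : ℝ) (hκAp : κAp = ‖Ap‖ * ‖(Apᵀ * Ap)⁻¹ * Apᵀ‖)
    (hη : η = κR * ε / (1 - κR * ε)) :
    e2norm (ys - yh) / e2norm yh ≤
      κAp * ε + κAp^2 * η * (e2norm (b - Ap *ᵥ yh) / (‖Ap‖ * e2norm yh) + ε) := by
  rcases Nat.eq_zero_or_pos n with rfl | hn
  · exact absurd (funext fun i => i.elim0) hne
  -- basic positivity facts
  have hNe : Nonempty (Fin n) := ⟨⟨0, hn⟩⟩
  have hRne : R ≠ 0 := by
    rintro rfl
    rw [det_zero] at hR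
    exact (by simpa using hR : False)
  have hRpos : 0 < ‖R‖ := norm_pos_iff.mpr hRne
  have hApne : Ap ≠ 0 := by
    rintro rfl
    rw [rank_zero] at hrank
    omega
  have hAppos : 0 < ‖Ap‖ := norm_pos_iff.mpr hApne
  have hEs : ‖Es‖ ≤ ε * ‖R‖ := by
    have := le_max_left (‖Es‖ / ‖R‖) (‖Ep‖ / ‖Ap‖)
    rw [← hε] at this
    exact (div_le_iff₀ hRpos).mp this
  have hEp : ‖Ep‖ ≤ ε * ‖Ap‖ := by
    have := le_max_right (‖Es‖ / ‖R‖) (‖Ep‖ / ‖Ap‖)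
    rw [← hε] at this
    exact (div_le_iff₀ hAppos).mp this
  have hεnn : 0 ≤ ε := le_trans (div_nonneg (norm_nonneg Es) (norm_nonneg R))
    (hε ▸ le_max_left _ _)
  have hκRnn : 0 ≤ κR := by rw [hκR]; positivity
  -- invertibility of AᵀA
  have hkerAp : LinearMap.ker Ap.mulVecLin = ⊥ := by
    have h1 := Ap.mulVecLin.finrank_range_add_finrank_ker
    have h2 : Module.finrank ℝ (LinearMap.range Ap.mulVecLin) = n := hrank
    rw [h2, Module.finrank_fin_fun] at h1
    have h3 : Module.finrank ℝ (LinearMap.ker Ap.mulVecLin) = 0 := by omega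
    exact Submodule.finrank_eq_zero.mp h3
  have hdet : IsUnit (Apᵀ * Ap).det := by
    rw [← isUnit_iff_isUnit_det]
    rw [← mulVec_injective_iff_isUnit]
    have : LinearMap.ker (Apᵀ * Ap).mulVecLin = ⊥ := by
      rw [ker_mulVecLin_transpose_mul_self, hkerAp]
    intro x y hxy
    have := LinearMap.ker_eq_bot.mp this
    exact this hxy
  have hP : ((Apᵀ * Ap)⁻¹ * Apᵀ) * Ap = 1 := by
    rw [Matrix.mul_assoc]; exact nonsing_inv_mul _ hdet
  -- invertibility of 1 + F
  have hFnorm : ‖F‖ < 1 := by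
    calc ‖F‖ ≤ ‖Es‖ * ‖R⁻¹‖ := hF ▸ l2_opNorm_mul Es R⁻¹
      _ ≤ ε * ‖R‖ * ‖R⁻¹‖ := mul_le_mul_of_nonneg_right hEs (norm_nonneg _)
      _ = κR * ε := by rw [hκR]; ring
      _ < 1 := hsmall
  have hGunit : IsUnit (1 + F) := by
    have h2 : IsUnit (1 - (-F)) := (Units.oneSub (-F) (by simpa using hFnorm)).isUnit
    rwa [sub_neg_eq_add] at h2
  have hGdet : IsUnit (1 + F).det := (isUnit_iff_isUnit_det _).mp hGunit
  have hA1' : A1 = Ap * (1 + F)⁻¹ := by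
    rw [hA1]
    congr 1
    have h := nonsing_inv_mul (1 + F) hGdet
    rw [mul_add, mul_one] at h
    rw [sub_eq_iff_eq_add]
    exact h.symm
  -- residual orthogonality
  have hres : Apᵀ *ᵥ (b - A2 *ᵥ yh) = 0 := by
    have h0 : A1ᵀ *ᵥ (b - A2 *ᵥ yh) = 0 := by
      rw [mulVec_sub, mulVec_mulVec, hyh, sub_self]
    rw [hA1', transpose_mul] at h0
    have h1 : (1 + F)ᵀ *ᵥ ((((1 + F)⁻¹)ᵀ * Apᵀ) *ᵥ (b - A2 *ᵥ yh)) = 0 := by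
      rw [h0, mulVec_zero]
    rwa [mulVec_mulVec, ← Matrix.mul_assoc, ← transpose_mul, nonsing_inv_mul _ hGdet,
      transpose_one, Matrix.one_mul] at h1
  -- key identity
  have hy : ((Apᵀ * Ap)⁻¹ * Apᵀ) *ᵥ (Ap *ᵥ yh) = yh := by
    rw [mulVec_mulVec, hP, one_mulVec]
  have hz : ((Apᵀ * Ap)⁻¹ * Apᵀ) *ᵥ (b - A2 *ᵥ yh) = 0 := by
    rw [← mulVec_mulVec, hres, mulVec_zero]
  have hkey : ys - yh = ((Apᵀ * Ap)⁻¹ * Apᵀ) *ᵥ (Ep *ᵥ yh) := by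
    calc ys - yh
        = ((Apᵀ * Ap)⁻¹ * Apᵀ) *ᵥ b - ((Apᵀ * Ap)⁻¹ * Apᵀ) *ᵥ (Ap *ᵥ yh) := by
          rw [hys, hy]
      _ = ((Apᵀ * Ap)⁻¹ * Apᵀ) *ᵥ (b - Ap *ᵥ yh) := (mulVec_sub _ _ _).symm
      _ = ((Apᵀ * Ap)⁻¹ * Apᵀ) *ᵥ ((b - A2 *ᵥ yh) + Ep *ᵥ yh) := by
          have hb : b - Ap *ᵥ yh = (b - A2 *ᵥ yh) + Ep *ᵥ yh := by
            rw [hA2, add_mulVec]; abel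
          rw [hb]
      _ = ((Apᵀ * Ap)⁻¹ * Apᵀ) *ᵥ (Ep *ᵥ yh) := by rw [mulVec_add, hz, zero_add]
  -- norm bound
  have hyhpos : 0 < e2norm yh := e2norm_pos hne
  have hbound : e2norm (ys - yh) ≤ κAp * ε * e2norm yh := by
    rw [hkey, hκAp]
    calc e2norm (((Apᵀ * Ap)⁻¹ * Apᵀ) *ᵥ (Ep *ᵥ yh))
        ≤ ‖(Apᵀ * Ap)⁻¹ * Apᵀ‖ * e2norm (Ep *ᵥ yh) := e2norm_mulVec_le _ _
      _ ≤ ‖(Apᵀ * Ap)⁻¹ * Apᵀ‖ * (‖Ep‖ * e2norm yh) :=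
          mul_le_mul_of_nonneg_left (e2norm_mulVec_le _ _) (norm_nonneg _)
      _ ≤ ‖(Apᵀ * Ap)⁻¹ * Apᵀ‖ * (ε * ‖Ap‖ * e2norm yh) := by
          have := e2norm_nonneg yh
          gcongr
      _ = ‖Ap‖ * ‖(Apᵀ * Ap)⁻¹ * Apᵀ‖ * ε * e2norm yh := by ring
  have hmain : e2norm (ys - yh) / e2norm yh ≤ κAp * ε :=
    (div_le_iff₀ hyhpos).mpr hbound
  -- the extra term is nonnegative
  have hκApnn : 0 ≤ κAp := by rw [hκAp]; positivity
  have hηnn : 0 ≤ η := by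
    rw [hη]
    have : 0 < 1 - κR * ε := by linarith
    positivity
  have hextra : 0 ≤ κAp ^ 2 * η * (e2norm (b - Ap *ᵥ yh) / (‖Ap‖ * e2norm yh) + ε) := by
    have h1 : 0 ≤ e2norm (b - Ap *ᵥ yh) / (‖Ap‖ * e2norm yh) :=
      div_nonneg (e2norm_nonneg _) (by positivity)
    have := e2norm_nonneg (b - Ap *ᵥ yh)
    positivity
  linarith
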